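/- arXiv:1405.1601 — 2 statements merged into one kernel-verified Lean document; each statement's English description precedes it below -/
import Mathlib

section
/- Let G be a connected simple graph of order n with edge connectivity k (1 ≤ k ≤ n − 1) having no trivial k-edge cut. Then there exists an integer m with max{k, 2} ≤ m ≤ ⌊n/2⌋ such that m(G,t) ≤ m(K^k_{n-m,m}, t) for all t = 0, 1, …, ⌊n/2⌋. -/
/-- `matchCount G t` is the number of `t`-matchings of `G`, i.e. the number of
`t`-element sets of pairwise disjoint edges of `G`. -/
noncomputable def matchCount {V : Type*} (G : SimpleGraph V) (t : ℕ) : ℕ :=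
  Nat.card {s : Finset (Sym2 V) // ↑s ⊆ G.edgeSet ∧ s.card = t ∧
    (s : Set (Sym2 V)).Pairwise fun e f => ∀ v, ¬(v ∈ e ∧ v ∈ f)}

/-- The edge connectivity of a graph: the minimum number of edges whose
deletion disconnects the graph. -/
noncomputable def edgeConn {V : Type*} (G : SimpleGraph V) : ℕ :=
  sInf {j | ∃ F : Set (Sym2 V), F ⊆ G.edgeSet ∧ F.ncard = j ∧ ¬(G.deleteEdges F).Connected}

/-- The edge cut `∂(S)`: the set of edges of `G` with exactly one endpoint in `S`. -/
def edgeCut {V : Type*} (G : SimpleGraph V) (S : Set V) : Set (Sym2 V) :=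
  {e | e ∈ G.edgeSet ∧ ∃ u ∈ S, ∃ v, v ∉ S ∧ e = s(u, v)}

/-- `Kstar n k` is the graph `K^k_{n-1,1}`: obtained from `K_1 ∪ K_{n-1}` by adding
`k` edges joining the vertex of `K_1` (vertex `n-1`) to `k` distinct vertices of `K_{n-1}`. -/
def Kstar (n k : ℕ) : SimpleGraph (Fin n) :=
  SimpleGraph.fromRel (fun u v =>
    (u.val < n - 1 ∧ v.val < n - 1) ∨ (u.val < k ∧ v.val = n - 1))

/-- `Kmk n m k` is the graph `K^k_{n-m,m}`: obtained from `K_{n-m} ∪ K_m` by adding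
`k` independent edges between the two parts. -/
def Kmk (n m k : ℕ) : SimpleGraph (Fin n) :=
  SimpleGraph.fromRel (fun u v =>
    (u.val < n - m ∧ v.val < n - m) ∨ (n - m ≤ u.val ∧ n - m ≤ v.val) ∨
    (u.val < k ∧ v.val = n - m + u.val))

/-- The Hosoya index: the total number of matchings of `G`. -/
noncomputable def hosoya {V : Type*} [Fintype V] (G : SimpleGraph V) : ℕ :=
  ∑ t ∈ Finset.range (Fintype.card V / 2 + 1), matchCount G t

/-!
Take a minimum edge cut `∂S`, with `S` its smaller side, and `m = |S|`. As no `k`-edge cut is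
trivial, every degree exceeds `k`, and this forces `|S| ≥ k + 2`. Completing both sides of the cut
to cliques only adds matchings, and two cliques joined by `k` edges have the most matchings when
those edges are independent: relabel a matching `M` by a bijection that depends only on the cut
edges of `M` and sends them onto a fixed independent set of cross edges. The cut edges of `M` are
read back off the image, so this relabelling is injective on matchings.
-/

open SimpleGraph Finset

section EdgeCut

variable {V : Type*} (G : SimpleGraph V)

lemma edgeCut_compl (S : Set V) : edgeCut G Sᶜ = edgeCut G S := by
  ext e
  constructor <;> rintro ⟨he, u, hu, v, hv, rfl⟩ <;>
    exact ⟨he, v, by simpa using hv, u, by simpa using hu, Sym2.eq_swap⟩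

lemma edgeCut_singleton (v : V) : edgeCut G {v} = G.incidenceSet v := by
  ext e
  constructor
  · rintro ⟨he, u, rfl, w, -, rfl⟩
    exact ⟨he, Sym2.mem_mk_left _ _⟩
  · rintro ⟨he, hve⟩
    induction e using Sym2.ind with
    | _ x y =>
    rcases Sym2.mem_iff.1 hve with rfl | rfl
    · exact ⟨he, v, rfl, y, (G.ne_of_adj he).symm, rfl⟩
    · exact ⟨he, v, rfl, x, G.ne_of_adj he, Sym2.eq_swap⟩

lemma mk_mem_edgeCut_iff {T : Set V} {x y : V} :
    s(x, y) ∈ edgeCut G T ↔ G.Adj x y ∧ ¬(x ∈ T ↔ y ∈ T) := by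
  constructor
  · rintro ⟨he, u, hu, v, hv, huv⟩
    refine ⟨he, ?_⟩
    rcases Sym2.eq_iff.1 huv with ⟨rfl, rfl⟩ | ⟨rfl, rfl⟩ <;> tauto
  · rintro ⟨hxy, hT⟩
    by_cases hx : x ∈ T
    · exact ⟨hxy, x, hx, y, by tauto, rfl⟩
    · exact ⟨hxy, y, by tauto, x, hx, Sym2.eq_swap⟩

lemma eq_of_mem_edgeCut {T : Set V} {c : Sym2 V} (hc : c ∈ edgeCut G T) {x y : V} (hx : x ∈ c)
    (hy : y ∈ c) (hxy : x ∈ T ↔ y ∈ T) : x = y := by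
  obtain ⟨-, u, hu, v, hv, rfl⟩ := hc
  rcases Sym2.mem_iff.1 hx with rfl | rfl <;> rcases Sym2.mem_iff.1 hy with rfl | rfl <;> tauto

lemma ncard_edgeCut_singleton [Fintype V] [DecidableEq V] [DecidableRel G.Adj] (v : V) :
    (edgeCut G {v}).ncard = G.degree v := by
  rw [edgeCut_singleton, ← card_incidenceSet_eq_degree, Set.ncard_eq_toFinset_card',
    Set.toFinset_card]

lemma not_connected_deleteEdges_edgeCut {S : Set V} {u v : V} (hu : u ∈ S) (hv : v ∉ S) :
    ¬(G.deleteEdges (edgeCut G S)).Connected := by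
  intro h
  obtain ⟨d, -, hd₁, hd₂⟩ := ((h.preconnected u v).some).exists_boundary_dart S hu hv
  have hd := d.adj
  rw [deleteEdges_adj] at hd
  exact hd.2 ⟨hd.1, d.fst, hd₁, d.snd, hd₂, rfl⟩

lemma edgeConn_le_ncard_edgeCut {S : Set V} {u v : V} (hu : u ∈ S) (hv : v ∉ S) :
    edgeConn G ≤ (edgeCut G S).ncard :=
  Nat.sInf_le ⟨edgeCut G S, fun _ he => he.1, rfl, not_connected_deleteEdges_edgeCut G hu hv⟩

lemma exists_ncard_edgeCut_le_edgeConn [Finite V] [Nontrivial V] :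
    ∃ S : Set V, S.Nonempty ∧ Sᶜ.Nonempty ∧ (edgeCut G S).ncard ≤ edgeConn G := by
  have hne : {j | ∃ F ⊆ G.edgeSet, F.ncard = j ∧ ¬(G.deleteEdges F).Connected}.Nonempty := by
    refine ⟨_, G.edgeSet, le_rfl, rfl, fun h => ?_⟩
    rw [deleteEdges_edgeSet, sdiff_self] at h
    exact not_preconnected_bot h.preconnected
  obtain ⟨F, hFG, hF, hdisc⟩ := Nat.sInf_mem hne
  obtain ⟨u, v, huv⟩ : ∃ u v, ¬(G.deleteEdges F).Reachable u v := by
    by_contra! h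
    exact hdisc (connected_iff_exists_forall_reachable _ |>.2 ⟨Classical.arbitrary V, h _⟩)
  refine ⟨{w | (G.deleteEdges F).Reachable u w}, ⟨u, .refl u⟩, ⟨v, huv⟩, ?_⟩
  have hcut : edgeCut G {w | (G.deleteEdges F).Reachable u w} ⊆ F := by
    rintro e ⟨he, x, hx, y, hy, rfl⟩
    by_contra heF
    exact hy (hx.trans (Adj.reachable ((deleteEdges_adj ..).2 ⟨he, heF⟩)))
  exact (Set.ncard_le_ncard hcut (Set.toFinite F)).trans hF.le

lemma sum_card_filter_adj_compl_le [Fintype V] [DecidableEq V] [DecidableRel G.Adj] (s : Finset V) :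
    ∑ u ∈ s, #{v ∈ sᶜ | G.Adj u v} ≤ (edgeCut G s).ncard := by
  classical
  rw [← card_sigma, Set.ncard_eq_toFinset_card']
  refine card_le_card_of_injOn (fun p => s(p.1, p.2)) (fun p hp => ?_) fun p hp q hq hpq => ?_
  · simp only [mem_coe, mem_sigma, mem_filter, mem_compl] at hp
    simpa using ⟨hp.2.2, p.1, hp.1, p.2, hp.2.1, rfl⟩
  · simp only [mem_coe, mem_sigma, mem_filter, mem_compl] at hp hq
    rcases Sym2.eq_iff.1 hpq with ⟨h₁, h₂⟩ | ⟨h₁, -⟩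
    · exact Sigma.ext h₁ (heq_of_eq h₂)
    · exact absurd (h₁ ▸ hp.1) hq.2.1

lemma degree_le_card_filter_adj_compl_add [Fintype V] [DecidableEq V] [DecidableRel G.Adj]
    {s : Finset V} {u : V} (hu : u ∈ s) :
    G.degree u ≤ #{v ∈ sᶜ | G.Adj u v} + (#s - 1) := by
  rw [← card_neighborFinset_eq_degree, ← card_erase_of_mem hu, add_comm]
  refine (card_le_card fun v hv => ?_).trans (card_union_le _ _)
  rw [mem_neighborFinset] at hv
  by_cases hvs : v ∈ s
  · exact mem_union_left _ (mem_erase.2 ⟨(G.ne_of_adj hv).symm, hvs⟩)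
  · exact mem_union_right _ (mem_filter.2 ⟨mem_compl.2 hvs, hv⟩)

/-- A side with `s ≤ k + 1` vertices sends at least `k + 2 - s` edges out of each of its
vertices, and `s (k + 2 - s) > k`. -/
lemma add_two_le_ncard_of_ncard_edgeCut_le [Fintype V] [DecidableRel G.Adj] {k : ℕ}
    (hdeg : ∀ v, k + 1 ≤ G.degree v) {S : Set V} (hS : S.Nonempty)
    (hcut : (edgeCut G S).ncard ≤ k) : k + 2 ≤ S.ncard := by
  classical
  obtain ⟨s, rfl⟩ := S.toFinite.exists_finset_coe
  rw [Set.ncard_coe_finset]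
  have hs : 1 ≤ #s := card_pos.2 (by exact_mod_cast hS)
  have hout : #s * (k + 2 - #s) ≤ k := by
    calc #s * (k + 2 - #s) = ∑ _u ∈ s, (k + 2 - #s) := by rw [sum_const, smul_eq_mul]
      _ ≤ ∑ u ∈ s, #{v ∈ sᶜ | G.Adj u v} := sum_le_sum fun u hu => by
          have := degree_le_card_filter_adj_compl_add G hu
          have := hdeg u
          omega
      _ ≤ k := (sum_card_filter_adj_compl_le G s).trans hcut
  by_contra! hsk
  obtain ⟨d, hd⟩ : ∃ d, k + 2 - #s = d + 1 := ⟨k + 1 - #s, by omega⟩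
  rw [hd] at hout
  have hk : k + 1 = #s + d := by omega
  nlinarith

end EdgeCut

lemma exists_subtype_equiv_extend {α β : Type*} [Fintype α] [Fintype β] {p : α → Prop}
    {q : β → Prop} (hpq : Nat.card {x // p x} = Nat.card {y // q y}) {A : Set α} {f : α → β}
    (hf : A.InjOn f) (hfA : ∀ x ∈ A, p x → q (f x)) :
    ∃ g : {x // p x} ≃ {y // q y}, ∀ x : {x // p x}, ↑x ∈ A → (g x : β) = f x := by
  classical
  have hcard : Fintype.card {x // p x} = #{y | q y} := by
    simpa [Nat.card_eq_fintype_card, Fintype.card_subtype] using hpq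
  obtain ⟨g, hg⟩ := Set.MapsTo.exists_equiv_extend_of_card_eq (s := {x | ↑x ∈ A})
    (f := fun x : {x // p x} => f x) hcard (fun x hx => by simpa using hfA x hx x.2)
    (fun x hx y hy hxy => Subtype.ext (hf hx hy hxy))
  exact ⟨g.trans (Equiv.subtypeEquivRight fun y => by simp), fun x hx => hg x hx⟩

lemma exists_equiv_extend_of_mem_iff {α β : Type*} [Fintype α] [Fintype β] {s : Set α}
    {t : Set β} (hcard : Fintype.card α = Fintype.card β) (hst : Nat.card s = Nat.card t)
    {A : Set α} {f : α → β} (hf : A.InjOn f) (hfA : ∀ x ∈ A, f x ∈ t ↔ x ∈ s) :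
    ∃ e : α ≃ β, (∀ x, e x ∈ t ↔ x ∈ s) ∧ ∀ x ∈ A, e x = f x := by
  classical
  obtain ⟨g₁, hg₁⟩ := exists_subtype_equiv_extend (p := (· ∈ s)) (q := (· ∈ t)) hst hf
    fun x hx => (hfA x hx).2
  have hst' : Nat.card {x // x ∉ s} = Nat.card {y // y ∉ t} := by
    rw [Nat.card_eq_fintype_card, Nat.card_eq_fintype_card, Fintype.card_subtype_compl,
      Fintype.card_subtype_compl, hcard, ← Nat.card_eq_fintype_card (α := s),
      ← Nat.card_eq_fintype_card (α := t), hst]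
  obtain ⟨g₂, hg₂⟩ := exists_subtype_equiv_extend (p := (· ∉ s)) (q := (· ∉ t)) hst' hf
    fun x hx => mt (hfA x hx).1
  refine ⟨(Equiv.sumCompl (· ∈ s)).symm.trans ((g₁.sumCongr g₂).trans (Equiv.sumCompl (· ∈ t))),
    fun x => ?_, fun x hx => ?_⟩ <;> by_cases hxs : x ∈ s
  · simp [Equiv.sumCompl_symm_apply_of_pos hxs, hxs]
  · simpa [Equiv.sumCompl_symm_apply_of_neg hxs, hxs] using (g₂ ⟨x, hxs⟩).2
  · simpa [Equiv.sumCompl_symm_apply_of_pos hxs] using hg₁ ⟨x, hxs⟩ hx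
  · simpa [Equiv.sumCompl_symm_apply_of_neg hxs] using hg₂ ⟨x, hxs⟩ hx

def matchings {V : Type*} (G : SimpleGraph V) (t : ℕ) : Set (Finset (Sym2 V)) :=
  {s | ↑s ⊆ G.edgeSet ∧ s.card = t ∧ (s : Set (Sym2 V)).Pairwise fun e f => ∀ v, ¬(v ∈ e ∧ v ∈ f)}

lemma matchCount_eq_ncard {V : Type*} (G : SimpleGraph V) (t : ℕ) :
    matchCount G t = (matchings G t).ncard := rfl

lemma pairwise_disjoint_image_map {V W : Type*} [DecidableEq W] {φ : V → W}
    (hφ : Function.Injective φ) {M : Finset (Sym2 V)}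
    (hM : (M : Set (Sym2 V)).Pairwise fun e f => ∀ v, ¬(v ∈ e ∧ v ∈ f)) :
    (M.image (Sym2.map φ) : Set (Sym2 W)).Pairwise fun e f => ∀ w, ¬(w ∈ e ∧ w ∈ f) := by
  simp only [coe_image]
  rintro _ ⟨e, he, rfl⟩ _ ⟨f, hf, rfl⟩ hne w ⟨hwe, hwf⟩
  obtain ⟨x, hx, rfl⟩ := Sym2.mem_map.1 hwe
  obtain ⟨y, hy, hxy⟩ := Sym2.mem_map.1 hwf
  exact hM he hf (fun h => hne (h ▸ rfl)) x ⟨hx, hφ hxy ▸ hy⟩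

lemma exists_equiv_map_eq_of_edgeCut {V W : Type*} [Fintype V] [Fintype W] {G : SimpleGraph V}
    {T : Set V} {L : Set W} {a b : edgeCut G T → W} (hcard : Fintype.card V = Fintype.card W)
    (hTL : Nat.card T = Nat.card L) (ha : Function.Injective a) (hb : Function.Injective b)
    (haL : ∀ c, a c ∈ L) (hbL : ∀ c, b c ∉ L) {C : Set (edgeCut G T)}
    (hC : ∀ c ∈ C, ∀ d ∈ C, ∀ v, v ∈ (c : Sym2 V) → v ∈ (d : Sym2 V) → c = d) :
    ∃ φ : V ≃ W, (∀ x, φ x ∈ L ↔ x ∈ T) ∧ ∀ c ∈ C, Sym2.map φ c = s(a c, b c) := by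
  classical
  obtain ⟨φ₀⟩ : Nonempty (V ≃ W) := Fintype.card_eq.1 hcard
  let f : V → W := fun x =>
    if h : ∃ c ∈ C, x ∈ (c : Sym2 V) then (if x ∈ T then a h.choose else b h.choose) else φ₀ x
  have hf : ∀ c ∈ C, ∀ x ∈ (c : Sym2 V), f x = if x ∈ T then a c else b c := by
    intro c hc x hx
    have h : ∃ c ∈ C, x ∈ (c : Sym2 V) := ⟨c, hc, hx⟩
    have hch : h.choose = c := hC _ h.choose_spec.1 c hc x h.choose_spec.2 hx
    simp only [f, dif_pos h, hch]
  have hfL : ∀ c ∈ C, ∀ x ∈ (c : Sym2 V), f x ∈ L ↔ x ∈ T := by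
    intro c hc x hx
    rw [hf c hc x hx]
    split_ifs with hxT <;> simp [hxT, haL, hbL]
  have hinj : Set.InjOn f {x | ∃ c ∈ C, x ∈ (c : Sym2 V)} := by
    rintro x ⟨c, hc, hx⟩ y ⟨d, hd, hy⟩ hxy
    have hT : x ∈ T ↔ y ∈ T := by rw [← hfL c hc x hx, ← hfL d hd y hy, hxy]
    rw [hf c hc x hx, hf d hd y hy] at hxy
    have hcd : c = d := by
      by_cases hxT : x ∈ T
      · exact ha (by simpa [hxT, hT.1 hxT] using hxy)
      · exact hb (by simpa [hxT, mt hT.2 hxT] using hxy)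
    subst hcd
    exact eq_of_mem_edgeCut G c.2 hx hy hT
  obtain ⟨φ, hφL, hφf⟩ :=
    exists_equiv_extend_of_mem_iff hcard hTL hinj fun x ⟨c, hc, hx⟩ => hfL c hc x hx
  refine ⟨φ, hφL, fun c hc => ?_⟩
  obtain ⟨-, u, hu, v, hv, huv⟩ := c.2
  have hu' : u ∈ (c : Sym2 V) := huv ▸ Sym2.mem_mk_left u v
  have hv' : v ∈ (c : Sym2 V) := huv ▸ Sym2.mem_mk_right u v
  rw [huv, Sym2.map_mk, hφf u ⟨c, hc, hu'⟩, hφf v ⟨c, hc, hv'⟩, hf c hc u hu', hf c hc v hv',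
    if_pos hu, if_neg hv]

theorem matchCount_le_of_edgeCut {V W : Type*} [Fintype V] [Fintype W] (G : SimpleGraph V)
    (H : SimpleGraph W) {T : Set V} {L : Set W} (hcard : Fintype.card V = Fintype.card W)
    (hTL : Nat.card T = Nat.card L) (hH : ∀ x y, x ≠ y → (x ∈ L ↔ y ∈ L) → H.Adj x y)
    {a b : edgeCut G T → W} (ha : Function.Injective a) (hb : Function.Injective b)
    (haL : ∀ c, a c ∈ L) (hbL : ∀ c, b c ∉ L) (hab : ∀ c, H.Adj (a c) (b c)) (t : ℕ) :
    matchCount G t ≤ matchCount H t := by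
  classical
  have hrel : ∀ C : Set (edgeCut G T), ∃ φ : V ≃ W, (∀ x, φ x ∈ L ↔ x ∈ T) ∧
      ((∀ c ∈ C, ∀ d ∈ C, ∀ v, v ∈ (c : Sym2 V) → v ∈ (d : Sym2 V) → c = d) →
        ∀ c ∈ C, Sym2.map φ c = s(a c, b c)) := by
    intro C
    by_cases hC : ∀ c ∈ C, ∀ d ∈ C, ∀ v, v ∈ (c : Sym2 V) → v ∈ (d : Sym2 V) → c = d
    · obtain ⟨φ, hφL, hφC⟩ := exists_equiv_map_eq_of_edgeCut hcard hTL ha hb haL hbL hC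
      exact ⟨φ, hφL, fun _ => hφC⟩
    · obtain ⟨φ, hφL, -⟩ := exists_equiv_map_eq_of_edgeCut (C := ∅) hcard hTL ha hb haL hbL
        (by simp)
      exact ⟨φ, hφL, fun h => absurd h hC⟩
  choose φ hφL hφC using hrel
  let cutOf (M : Finset (Sym2 V)) : Set (edgeCut G T) := {c | ↑c ∈ M}
  let Φ (M : Finset (Sym2 V)) : Finset (Sym2 W) := M.image (Sym2.map (φ (cutOf M)))
  have hcutOf : ∀ M ∈ matchings G t, ∀ c ∈ cutOf M, Sym2.map (φ (cutOf M)) c = s(a c, b c) :=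
    fun M hM => hφC _ fun c hc d hd v hvc hvd =>
      Subtype.ext (by by_contra hne; exact hM.2.2 hc hd hne v ⟨hvc, hvd⟩)
  have hrecover : ∀ M ∈ matchings G t, ∀ c, s(a c, b c) ∈ Φ M ↔ ↑c ∈ M := by
    intro M hM c
    refine ⟨fun hc => ?_, fun hc => mem_image.2 ⟨c, hc, hcutOf M hM c hc⟩⟩
    obtain ⟨e, he, hec⟩ := mem_image.1 hc
    obtain ⟨x, hx, hxa⟩ := Sym2.mem_map.1 (hec ▸ Sym2.mem_mk_left (a c) (b c))
    obtain ⟨y, hy, hyb⟩ := Sym2.mem_map.1 (hec ▸ Sym2.mem_mk_right (a c) (b c))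
    have hxT : x ∈ T := (hφL _ x).1 (hxa ▸ haL c)
    have hyT : y ∉ T := mt (hφL _ y).2 (hyb ▸ hbL c)
    have hexy : e = s(x, y) := (Sym2.mem_and_mem_iff (by rintro rfl; exact hyT hxT)).1 ⟨hx, hy⟩
    have hecut : e ∈ edgeCut G T := by
      subst hexy
      exact (mk_mem_edgeCut_iff G).2 ⟨hM.1 he, by tauto⟩
    have hd := hcutOf M hM ⟨e, hecut⟩ he
    rw [hec] at hd
    rcases Sym2.eq_iff.1 hd with ⟨h, -⟩ | ⟨h, -⟩
    · rw [ha h]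
      exact he
    · exact absurd (h ▸ haL c) (hbL _)
  rw [matchCount_eq_ncard, matchCount_eq_ncard]
  refine Set.ncard_le_ncard_of_injOn Φ (fun M hM => ⟨?_, ?_, ?_⟩) (fun M hM M' hM' h => ?_)
    (Set.toFinite _)
  · simp only [Φ, coe_image, Set.image_subset_iff]
    intro e he
    by_cases hecut : e ∈ edgeCut G T
    · simpa [hcutOf M hM ⟨e, hecut⟩ he] using hab ⟨e, hecut⟩
    · induction e using Sym2.ind with
      | _ x y =>
      have hxy : G.Adj x y := hM.1 he
      rw [mk_mem_edgeCut_iff G, not_and, not_not] at hecut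
      simp only [Set.mem_preimage, Sym2.map_mk, mem_edgeSet]
      exact hH _ _ ((φ _).injective.ne hxy.ne) (by rw [hφL, hφL]; exact hecut hxy)
  · rw [card_image_of_injective _ (Sym2.map.injective (φ _).injective)]
    exact hM.2.1
  · exact pairwise_disjoint_image_map (φ _).injective hM.2.2
  · have hcut : cutOf M = cutOf M' := Set.ext fun c =>
      (hrecover M hM c).symm.trans (h ▸ hrecover M' hM' c)
    simp only [Φ, hcut] at h
    exact image_injective (Sym2.map.injective (φ _).injective) h

theorem matchCount_le_matchCount_Kmk {V : Type*} [Fintype V] (G : SimpleGraph V) {n m k : ℕ}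
    (hn : Fintype.card V = n) {T : Set V} (hT : T.ncard + m = n) (hkm : k ≤ m) (hmn : m ≤ n / 2)
    (hcut : (edgeCut G T).ncard ≤ k) (t : ℕ) :
    matchCount G t ≤ matchCount (Kmk n m k) t := by
  classical
  obtain ⟨ι⟩ : Nonempty (edgeCut G T ↪ Fin k) := Function.Embedding.nonempty_of_card_le <| by
    rwa [Fintype.card_fin, ← Nat.card_eq_fintype_card, Nat.card_coe_set_eq]
  refine matchCount_le_of_edgeCut G (Kmk n m k) (L := {x | (x : ℕ) < n - m})
    (a := fun c => ⟨ι c, by grind⟩) (b := fun c => ⟨n - m + ι c, by grind⟩) (by simpa using hn)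
    ?card (fun x y hxy hL => ?sides) ?_ ?_ (fun c => by grind) (fun c => by grind)
    (fun c => ?cross) t
  case card =>
    rw [Nat.card_coe_set_eq, show T.ncard = n - m by omega]
    exact (Nat.card_eq_fintype_card.trans (Fintype.card_fin_lt_of_le (Nat.sub_le n m))).symm
  case sides =>
    simp only [Set.mem_ofPred_eq] at hL
    simp only [Kmk, fromRel_adj]
    omega
  case cross =>
    simp only [Kmk, fromRel_adj, ne_eq, Fin.ext_iff, and_true]
    omega
  all_goals exact fun c d h => ι.injective (Fin.ext (by simpa using congrArg Fin.val h))

theorem stmt10_general {V : Type*} [Fintype V] (G : SimpleGraph V) (n k : ℕ)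
    (hn : Fintype.card V = n) (hk : edgeConn G = k)
    (hk1 : 1 ≤ k) (hk2 : k ≤ n - 1)
    (htriv : ¬ ∃ v : V, (edgeCut G {v}).ncard = k) :
    ∃ m : ℕ, max k 2 ≤ m ∧ m ≤ n / 2 ∧
      ∀ t : ℕ, t ≤ n / 2 → matchCount G t ≤ matchCount (Kmk n m k) t := by
  classical
  have : Nontrivial V := Fintype.one_lt_card_iff_nontrivial.1 (by omega)
  have hdeg : ∀ v, k + 1 ≤ G.degree v := fun v => by
    obtain ⟨w, hw⟩ := exists_ne v
    have hle := hk ▸ edgeConn_le_ncard_edgeCut G (Set.mem_singleton v) hw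
    have hne : (edgeCut G {v}).ncard ≠ k := fun h => htriv ⟨v, h⟩
    rw [ncard_edgeCut_singleton] at hle hne
    omega
  obtain ⟨S, hS, hSc, hcut⟩ := exists_ncard_edgeCut_le_edgeConn G
  rw [hk] at hcut
  wlog hle : S.ncard ≤ Sᶜ.ncard generalizing S
  · exact this Sᶜ hSc (by rwa [compl_compl]) (by rwa [edgeCut_compl]) (by rw [compl_compl]; omega)
  have hS2 := add_two_le_ncard_of_ncard_edgeCut_le G hdeg hS hcut
  have hsum : S.ncard + Sᶜ.ncard = n := by
    rw [Set.ncard_add_ncard_compl, Nat.card_eq_fintype_card, hn]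
  refine ⟨S.ncard, by omega, by omega, fun t _ => ?_⟩
  exact matchCount_le_matchCount_Kmk G hn (T := Sᶜ) (by omega) (by omega) (by omega)
    (by rwa [edgeCut_compl]) t

/-- If `G` is connected of order `n` with edge connectivity `k` (`1 ≤ k ≤ n − 1`) and
has no trivial `k`-edge cut, then `m(G,t) ≤ m(K^k_{n-m,m},t)` for all `t ≤ ⌊n/2⌋`,
for some `m` with `max{k,2} ≤ m ≤ ⌊n/2⌋`. -/
theorem stmt10 {V : Type*} [Fintype V] (G : SimpleGraph V) (n k : ℕ)
    (hn : Fintype.card V = n) (hG : G.Connected) (hk : edgeConn G = k)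
    (hk1 : 1 ≤ k) (hk2 : k ≤ n - 1)
    (htriv : ¬ ∃ v : V, (edgeCut G {v}).ncard = k) :
    ∃ m : ℕ, max k 2 ≤ m ∧ m ≤ n / 2 ∧
      ∀ t : ℕ, t ≤ n / 2 → matchCount G t ≤ matchCount (Kmk n m k) t :=
  stmt10_general G n k hn hk hk1 hk2 htriv
end

section
/- For every positive integer m and every t = 0, 1, …, m: m(K^1_{m+1,m}, t) ≤ m(K^1_{2m,1}, t). -/
/-! Write `K^1_{m+1,m}` as cliques on `A` and `Aᶜ` joined by an edge `zb`, and `K^1_{2m,1}` as a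
clique on all vertices but one `a ∈ Aᶜ \ {b}`, plus the pendant edge `za`. A matching of the
former that avoids `a` is a matching of the latter. Otherwise `a` is matched to some `x ∉ A`, and
one transposition turns the matching into one of the latter: `(c a)` if `z` is matched to `c`
(so `zc, xa` become `za, cx`), `(z b)` if `x = b` and `z` is unmatched, and `(z a)` otherwise.
The transposition can be read off the image (is `a` matched, is there an edge from `A \ {z}` to
`Aᶜ`, is `b` matched), so this size-preserving relabelling of matchings is injective. -/

open SimpleGraph Equiv
open scoped Pointwise

instance Sym2.permMulAction {V : Type*} : MulAction (Perm V) (Sym2 V) where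
  smul σ := Sym2.map σ
  one_smul := congrFun Sym2.map_id'
  mul_smul σ τ e := (Sym2.map_map (g := σ) (f := τ) e).symm

section Matchings

variable {V : Type*}

lemma Sym2.perm_smul_mk (σ : Perm V) (u v : V) : σ • s(u, v) = s(σ u, σ v) := rfl

lemma Sym2.apply_mem_perm_smul {σ : Perm V} {v : V} {e : Sym2 V} : σ v ∈ σ • e ↔ v ∈ e :=
  Sym2.mem_map.trans ⟨fun ⟨_, hw, hwv⟩ => σ.injective hwv ▸ hw, fun h => ⟨v, h, rfl⟩⟩

def IsMatchingSet (G : SimpleGraph V) (M : Finset (Sym2 V)) : Prop :=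
  ↑M ⊆ G.edgeSet ∧ (M : Set (Sym2 V)).Pairwise fun e f => ∀ v, ¬(v ∈ e ∧ v ∈ f)

variable {G : SimpleGraph V} {M : Finset (Sym2 V)}

lemma IsMatchingSet.eq_of_mem (hM : IsMatchingSet G M) {e f : Sym2 V} {v : V}
    (he : e ∈ M) (hf : f ∈ M) (hve : v ∈ e) (hvf : v ∈ f) : e = f := by
  by_contra hne
  exact hM.2 he hf hne v ⟨hve, hvf⟩

lemma IsMatchingSet.ne {u v : V} (hM : IsMatchingSet G M) (h : s(u, v) ∈ M) : u ≠ v :=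
  G.ne_of_adj (hM.1 h)

variable [DecidableEq V]

lemma pairwise_disjoint_perm_smul (σ : Perm V)
    (hM : (M : Set (Sym2 V)).Pairwise fun e f => ∀ v, ¬(v ∈ e ∧ v ∈ f)) :
    ((σ • M : Finset (Sym2 V)) : Set (Sym2 V)).Pairwise fun e f => ∀ v, ¬(v ∈ e ∧ v ∈ f) := by
  intro e he f hf hne v hv
  simp only [Finset.mem_coe, ← Finset.inv_smul_mem_iff] at he hf
  exact hM he hf (fun h => hne (smul_left_cancel _ h)) (σ⁻¹ v)
    ⟨Sym2.apply_mem_perm_smul.mpr hv.1, Sym2.apply_mem_perm_smul.mpr hv.2⟩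

theorem matchCount_le_of_perm_smul [Finite V] {H : SimpleGraph V}
    (σ κ : Finset (Sym2 V) → Perm V)
    (hH : ∀ M, IsMatchingSet G M → ↑(σ M • M) ⊆ H.edgeSet)
    (hκ : ∀ M, IsMatchingSet G M → κ (σ M • M) = σ M) (t : ℕ) :
    matchCount G t ≤ matchCount H t := by
  refine Nat.card_le_card_of_injective
    (fun M => ⟨σ M.1 • M.1, hH _ ⟨M.2.1, M.2.2.2⟩, by rw [Finset.card_smul_finset, M.2.2.1],
      pairwise_disjoint_perm_smul _ M.2.2.2⟩) ?_
  rintro ⟨M₁, hM₁⟩ ⟨M₂, hM₂⟩ h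
  have h' : σ M₁ • M₁ = σ M₂ • M₂ := congrArg Subtype.val h
  have hσ : σ M₁ = σ M₂ := by
    rw [← hκ M₁ ⟨hM₁.1, hM₁.2.2⟩, ← hκ M₂ ⟨hM₂.1, hM₂.2.2⟩, h']
  rw [hσ] at h'
  exact Subtype.ext (smul_left_cancel _ h')

end Matchings

section Switching

variable {V : Type*} {A : Set V} {z b a c x : V} {M : Finset (Sym2 V)}

-- `K^1_{|A|,|Aᶜ|}` when `z ∈ A` and `b ∉ A`.
def twoCliques (A : Set V) (z b : V) : SimpleGraph V :=
  fromRel fun u v => (u ∈ A ↔ v ∈ A) ∨ s(u, v) = s(z, b)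

-- `K^1_{n-1,1}` with `a` the vertex of `K_1`.
def cliqueWithPendant (a z : V) : SimpleGraph V :=
  fromRel fun u v => (u ≠ a ∧ v ≠ a) ∨ s(u, v) = s(z, a)

lemma twoCliques_adj {u v : V} :
    (twoCliques A z b).Adj u v ↔ u ≠ v ∧ ((u ∈ A ↔ v ∈ A) ∨ s(u, v) = s(z, b)) := by
  rw [twoCliques, fromRel_adj, Sym2.eq_swap (a := v), iff_comm (a := v ∈ A), or_self]

lemma cliqueWithPendant_adj {u v : V} :
    (cliqueWithPendant a z).Adj u v ↔ u ≠ v ∧ ((u ≠ a ∧ v ≠ a) ∨ s(u, v) = s(z, a)) := by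
  rw [cliqueWithPendant, fromRel_adj, Sym2.eq_swap (a := v), and_comm (a := v ≠ a), or_self]

lemma IsMatchingSet.eq_of_mk_mem_of_mem_of_notMem (hb : b ∉ A)
    (hM : IsMatchingSet (twoCliques A z b) M) {w : V} (h : s(c, w) ∈ M) (hc : c ∈ A)
    (hw : w ∉ A) : c = z ∧ w = b := by
  obtain ⟨-, hcw | hcw⟩ := twoCliques_adj.mp (hM.1 h)
  · exact absurd (hcw.mp hc) hw
  · rcases Sym2.eq_iff.mp hcw with h | ⟨rfl, -⟩
    · exact h
    · exact absurd hc hb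

lemma IsMatchingSet.notMem_of_mk_mem (hb : b ∉ A) (ha : a ∉ A) (hab : b ≠ a)
    (hM : IsMatchingSet (twoCliques A z b) M) (hx : s(a, x) ∈ M) : x ∉ A := fun hxA =>
  hab (hM.eq_of_mk_mem_of_mem_of_notMem hb (Sym2.eq_swap ▸ hx) hxA ha).2.symm

variable [DecidableEq V]

lemma mk_mem_swap_smul {p q u v : V} :
    s(u, v) ∈ swap p q • M ↔ s(swap p q u, swap p q v) ∈ M := by
  rw [← Finset.inv_smul_mem_iff, swap_inv, Sym2.perm_smul_mk]

lemma perm_smul_subset_edgeSet_cliqueWithPendant {G : SimpleGraph V} {σ : Perm V}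
    (hM : IsMatchingSet G M) (hσ : ∀ e ∈ M, σ⁻¹ a ∈ e → σ • e = s(z, a)) :
    ↑(σ • M) ⊆ (cliqueWithPendant a z).edgeSet := by
  intro e he
  rw [Finset.mem_coe, ← Finset.inv_smul_mem_iff] at he
  induction e using Sym2.ind with
  | _ u v =>
  have huv : u ≠ v := fun h => hM.ne he (congrArg (⇑σ⁻¹) h)
  rw [mem_edgeSet, cliqueWithPendant_adj]
  by_cases hae : a ∈ s(u, v)
  · have := hσ _ he (Sym2.apply_mem_perm_smul.mpr hae)
    rw [smul_inv_smul] at this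
    exact ⟨huv, Or.inr this⟩
  · rw [Sym2.mem_iff, not_or] at hae
    exact ⟨huv, Or.inl ⟨Ne.symm hae.1, Ne.symm hae.2⟩⟩

open Classical in
noncomputable def switchPerm (z b a : V) (M : Finset (Sym2 V)) : Perm V :=
  if ∀ x, s(a, x) ∉ M then 1
  else if h : ∃ c, s(z, c) ∈ M then swap h.choose a
  else if s(a, b) ∈ M then swap z b
  else swap z a

lemma switchPerm_smul_subset (hz : z ∈ A) (ha : a ∉ A) (hab : b ≠ a)
    (hM : IsMatchingSet (twoCliques A z b) M) :
    ↑(switchPerm z b a M • M) ⊆ (cliqueWithPendant a z).edgeSet := by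
  have hza : z ≠ a := ne_of_mem_of_not_mem hz ha
  refine perm_smul_subset_edgeSet_cliqueWithPendant hM fun e he hae => ?_
  unfold switchPerm at hae ⊢
  split_ifs at hae ⊢ with hfree hzc hba
  · obtain ⟨y, rfl⟩ := Sym2.mem_iff_exists.mp hae
    exact absurd he (hfree y)
  · have hc := hzc.choose_spec
    rw [swap_inv, swap_apply_right] at hae
    rw [hM.eq_of_mem he hc hae (Sym2.mem_mk_right _ _), Sym2.perm_smul_mk, swap_apply_left,
      swap_apply_of_ne_of_ne (hM.ne hc) hza, Sym2.eq_swap]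
  · rw [swap_inv, swap_apply_of_ne_of_ne (Ne.symm hza) (Ne.symm hab)] at hae
    rw [hM.eq_of_mem he hba hae (Sym2.mem_mk_left _ _), Sym2.perm_smul_mk, swap_apply_right,
      swap_apply_of_ne_of_ne (Ne.symm hza) (Ne.symm hab), Sym2.eq_swap]
  · rw [swap_inv, swap_apply_right] at hae
    obtain ⟨y, rfl⟩ := Sym2.mem_iff_exists.mp hae
    exact absurd ⟨y, he⟩ hzc

open Classical in
noncomputable def unswitchPerm (A : Set V) (z b a : V) (N : Finset (Sym2 V)) : Perm V :=
  if ∀ x, s(a, x) ∉ N then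
    if ∃ x ∉ A, x ≠ b ∧ s(z, x) ∈ N then swap z a else 1
  else if h : ∃ c ∈ A, c ≠ z ∧ ∃ x ∉ A, s(c, x) ∈ N then swap h.choose a
  else if ∃ x, s(b, x) ∈ N then swap b a
  else swap z b

lemma unswitchPerm_eq_one (hz : z ∈ A) (hb : b ∉ A)
    (hM : IsMatchingSet (twoCliques A z b) M) (hfree : ∀ x, s(a, x) ∉ M) :
    unswitchPerm A z b a M = 1 := by
  rw [unswitchPerm, if_pos hfree, if_neg]
  rintro ⟨x, hxA, hxb, hzx⟩
  exact hxb (hM.eq_of_mk_mem_of_mem_of_notMem hb hzx hz hxA).2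

lemma unswitchPerm_swap_za_smul (hb : b ∉ A) (ha : a ∉ A)
    (hab : b ≠ a) (hM : IsMatchingSet (twoCliques A z b) M) (hzfree : ∀ y, s(z, y) ∉ M)
    (hx : s(a, x) ∈ M) (hbx : s(a, b) ∉ M) :
    unswitchPerm A z b a (swap z a • M) = swap z a := by
  have hxz : x ≠ z := fun h => hzfree a (by rwa [Sym2.eq_swap, ← h])
  have hafree : ∀ y, s(a, y) ∉ swap z a • M := fun y h => by
    rw [mk_mem_swap_smul, swap_apply_right] at h
    exact hzfree _ h
  have hzx : s(z, x) ∈ swap z a • M := by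
    rwa [mk_mem_swap_smul, swap_apply_left, swap_apply_of_ne_of_ne hxz (hM.ne hx).symm]
  rw [unswitchPerm, if_pos hafree,
    if_pos ⟨x, hM.notMem_of_mk_mem hb ha hab hx, fun h => hbx (h ▸ hx), hzx⟩]

lemma unswitchPerm_swap_zb_smul (hz : z ∈ A) (hb : b ∉ A) (hab : b ≠ a)
    (hM : IsMatchingSet (twoCliques A z b) M) (hzfree : ∀ y, s(z, y) ∉ M) (hba : s(a, b) ∈ M) :
    unswitchPerm A z b a (swap z b • M) = swap z b := by
  have haz : a ≠ z := fun h => hzfree b (h ▸ hba)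
  have hcov : ¬ ∀ y, s(a, y) ∉ swap z b • M := fun h => h z (by
    rwa [mk_mem_swap_smul, swap_apply_left, swap_apply_of_ne_of_ne haz hab.symm])
  have hncross : ¬ ∃ c ∈ A, c ≠ z ∧ ∃ y ∉ A, s(c, y) ∈ swap z b • M := by
    rintro ⟨c, hcA, hcz, y, hyA, hcy⟩
    rw [mk_mem_swap_smul, swap_apply_of_ne_of_ne hcz (ne_of_mem_of_not_mem hcA hb)] at hcy
    by_cases hyb : y = b
    · rw [hyb, swap_apply_right] at hcy
      exact hzfree c (Sym2.eq_swap ▸ hcy)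
    · rw [swap_apply_of_ne_of_ne (ne_of_mem_of_not_mem hz hyA).symm hyb] at hcy
      exact hcz (hM.eq_of_mk_mem_of_mem_of_notMem hb hcy hcA hyA).1
  have hbfree : ¬ ∃ y, s(b, y) ∈ swap z b • M := fun ⟨y, hy⟩ => by
    rw [mk_mem_swap_smul, swap_apply_right] at hy
    exact hzfree _ hy
  rw [unswitchPerm, if_neg hcov, dif_neg hncross, if_neg hbfree]

lemma eq_of_mk_mem_swap_smul (hb : b ∉ A) (ha : a ∉ A)
    (hM : IsMatchingSet (twoCliques A z b) M) (hc : s(z, c) ∈ M) {c' y : V}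
    (hc'A : c' ∈ A) (hc'z : c' ≠ z) (hyA : y ∉ A) (hy : s(c', y) ∈ swap c a • M) : c' = c := by
  by_contra hne
  rw [mk_mem_swap_smul, swap_apply_of_ne_of_ne hne (ne_of_mem_of_not_mem hc'A ha)] at hy
  by_cases hya : y = a
  · rw [hya, swap_apply_right] at hy
    exact hc'z (Sym2.congr_left.mp
      (hM.eq_of_mem hy hc (Sym2.mem_mk_right _ _) (Sym2.mem_mk_right _ _)))
  by_cases hyc : y = c
  · rw [hyc, swap_apply_left] at hy
    exact hc'z (hM.eq_of_mk_mem_of_mem_of_notMem hb hy hc'A ha).1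
  · rw [swap_apply_of_ne_of_ne hyc hya] at hy
    exact hc'z (hM.eq_of_mk_mem_of_mem_of_notMem hb hy hc'A hyA).1

lemma unswitchPerm_swap_ca_smul (hz : z ∈ A) (hb : b ∉ A) (ha : a ∉ A) (hab : b ≠ a)
    (hM : IsMatchingSet (twoCliques A z b) M) (hc : s(z, c) ∈ M) (hx : s(a, x) ∈ M) :
    unswitchPerm A z b a (swap c a • M) = swap c a := by
  have hza : z ≠ a := ne_of_mem_of_not_mem hz ha
  have hcz : c ≠ z := (hM.ne hc).symm
  have hxA : x ∉ A := hM.notMem_of_mk_mem hb ha hab hx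
  have hxc : x ≠ c := by
    rintro rfl
    exact hza (Sym2.congr_left.mp
      (hM.eq_of_mem hc hx (Sym2.mem_mk_right _ _) (Sym2.mem_mk_right _ _)))
  have hcov : ¬ ∀ y, s(a, y) ∉ swap c a • M := fun h => h z (by
    rwa [mk_mem_swap_smul, swap_apply_right, swap_apply_of_ne_of_ne hcz.symm hza, Sym2.eq_swap])
  have hcx : s(c, x) ∈ swap c a • M := by
    rwa [mk_mem_swap_smul, swap_apply_left, swap_apply_of_ne_of_ne hxc (hM.ne hx).symm]
  rw [unswitchPerm, if_neg hcov]
  by_cases hcA : c ∈ A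
  · have hex : ∃ c' ∈ A, c' ≠ z ∧ ∃ y ∉ A, s(c', y) ∈ swap c a • M := ⟨c, hcA, hcz, x, hxA, hcx⟩
    obtain ⟨hc'A, hc'z, y, hyA, hy⟩ := hex.choose_spec
    rw [dif_pos hex, eq_of_mk_mem_swap_smul hb ha hM hc hc'A hc'z hyA hy]
  · obtain rfl := (hM.eq_of_mk_mem_of_mem_of_notMem hb hc hz hcA).2
    rw [dif_neg fun ⟨c', hc'A, hc'z, y, hyA, hy⟩ =>
      hcA (eq_of_mk_mem_swap_smul hb ha hM hc hc'A hc'z hyA hy ▸ hc'A), if_pos ⟨x, hcx⟩]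

lemma unswitchPerm_switchPerm_smul (hz : z ∈ A) (hb : b ∉ A) (ha : a ∉ A) (hab : b ≠ a)
    (hM : IsMatchingSet (twoCliques A z b) M) :
    unswitchPerm A z b a (switchPerm z b a M • M) = switchPerm z b a M := by
  unfold switchPerm
  split_ifs with hfree hzc hba
  · rw [one_smul, unswitchPerm_eq_one hz hb hM hfree]
  · obtain ⟨x, hx⟩ := not_forall_not.mp hfree
    exact unswitchPerm_swap_ca_smul hz hb ha hab hM hzc.choose_spec hx
  · exact unswitchPerm_swap_zb_smul hz hb hab hM (not_exists.mp hzc) hba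
  · obtain ⟨x, hx⟩ := not_forall_not.mp hfree
    exact unswitchPerm_swap_za_smul hb ha hab hM (not_exists.mp hzc) hx hba

theorem matchCount_twoCliques_le [Finite V] (hz : z ∈ A) (hb : b ∉ A) (ha : a ∉ A) (hab : b ≠ a)
    (t : ℕ) : matchCount (twoCliques A z b) t ≤ matchCount (cliqueWithPendant a z) t :=
  matchCount_le_of_perm_smul (switchPerm z b a) (unswitchPerm A z b a)
    (fun _ hM => switchPerm_smul_subset hz ha hab hM)
    (fun _ hM => unswitchPerm_switchPerm_smul hz hb ha hab hM) t

end Switching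

section Fin

variable {m : ℕ}

lemma Kmk_eq_twoCliques (hm : 0 < m) :
    Kmk (2 * m + 1) m 1 = twoCliques {v | v.val ≤ m} 0 ⟨m + 1, by omega⟩ := by
  ext u v
  simp only [Kmk, twoCliques, fromRel_adj, Sym2.eq_iff, Fin.ext_iff, Fin.val_zero,
    Set.mem_ofPred_eq]
  omega

lemma Kstar_eq_cliqueWithPendant :
    Kstar (2 * m + 1) 1 = cliqueWithPendant (Fin.last (2 * m)) 0 := by
  ext u v
  simp only [Kstar, cliqueWithPendant, fromRel_adj, Sym2.eq_iff, ne_eq, Fin.ext_iff, Fin.val_last,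
    Fin.val_zero]
  omega

lemma Kmk_eq_Kstar (hm : m ≤ 1) : Kmk (2 * m + 1) m 1 = Kstar (2 * m + 1) 1 := by
  ext u v
  simp only [Kmk, Kstar, fromRel_adj]
  omega

end Fin

theorem stmt13_general (m : ℕ) :
    ∀ t : ℕ, t ≤ m →
      matchCount (Kmk (2 * m + 1) m 1) t ≤ matchCount (Kstar (2 * m + 1) 1) t := by
  intro t _
  rcases le_or_gt m 1 with hm | hm
  · rw [Kmk_eq_Kstar hm]
  · rw [Kmk_eq_twoCliques (by omega), Kstar_eq_cliqueWithPendant]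
    exact matchCount_twoCliques_le (by simp) (by simp) (by simp; omega)
      (by simp [Fin.ext_iff]; omega) t

/-- For every positive integer `m` and `t ≤ m`: `m(K^1_{m+1,m},t) ≤ m(K^1_{2m,1},t)`. -/
theorem stmt13 (m : ℕ) (hm : 1 ≤ m) :
    ∀ t : ℕ, t ≤ m →
      matchCount (Kmk (2 * m + 1) m 1) t ≤ matchCount (Kstar (2 * m + 1) 1) t :=
  stmt13_general m
end
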